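/- Let γ(s,t) be an arclength-parametrized inextensible flow of pseudo null curves in E⁴₁ with pseudo null Frenet frame {T, N, B₁, B₂}, curvatures k₁ = 1, k₂, k₃, and flow ∂γ/∂t = α₁T + α₂N + α₃B₁ + α₄B₂ (so ∂α₁/∂s = α₄). Setting ψ₁ = ⟨∂N/∂t, B₁⟩, ψ₂ = ⟨∂N/∂t, B₂⟩, ψ₃ = ⟨∂B₁/∂t, B₂⟩, the frame evolves by: ∂N/∂t = −(∂α₄/∂s − α₃k₂) T + ψ₂ N + ψ₁ B₁, ∂B₁/∂t = −(∂α₃/∂s + α₂k₂ − α₄k₃) T + ψ₃ N − ψ₁ B₂, and ∂B₂/∂t = −(∂α₂/∂s + α₁ + α₃k₃) T − ψ₃ B₁ − ψ₂ B₂. -/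

import Mathlib

/-!
Differentiating the Gram relations of the frame in `t` shows that `∂/∂t` of a pseudo null frame is
skew with respect to the Minkowski form, so `∂N/∂t`, `∂B₁/∂t`, `∂B₂/∂t` are determined by
`ψ₁, ψ₂, ψ₃` together with the pairings of `∂T/∂t` with `N`, `B₁`, `B₂`. Since mixed partials of
`γ` commute, `∂T/∂t = ∂/∂s (∂γ/∂t)`, which the Frenet equations compute explicitly.
-/

noncomputable section

/-- The Minkowski bilinear form on `ℝ⁴` with signature `(-,+,+,+)`. -/
def mink (v w : Fin 4 → ℝ) : ℝ :=
  -(v 0 * w 0) + v 1 * w 1 + v 2 * w 2 + v 3 * w 3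

/-- The Minkowski norm `‖v‖ = √|⟨v,v⟩|`. -/
def mnorm (v : Fin 4 → ℝ) : ℝ := Real.sqrt |mink v v|

section PartialDerivatives

variable {G : Type*} [NormedAddCommGroup G] [NormedSpace ℝ G] {F : ℝ → ℝ → G}

lemma hasDerivAt_partial_fst (hF : Differentiable ℝ (fun p : ℝ × ℝ => F p.1 p.2)) (s t : ℝ) :
    HasDerivAt (fun x => F x t) (deriv (fun x => F x t) s) s :=
  ((hF (s, t)).comp (f := fun x : ℝ => (x, t)) s
    (differentiableAt_id.prodMk (differentiableAt_const t))).hasDerivAt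

lemma hasDerivAt_partial_snd (hF : Differentiable ℝ (fun p : ℝ × ℝ => F p.1 p.2)) (s t : ℝ) :
    HasDerivAt (fun τ => F s τ) (deriv (fun τ => F s τ) t) t :=
  ((hF (s, t)).comp (f := fun τ : ℝ => (s, τ)) t
    ((differentiableAt_const s).prodMk differentiableAt_id)).hasDerivAt

lemma HasFDerivAt.hasDerivAt_fst {g : ℝ × ℝ → G} {g' : ℝ × ℝ →L[ℝ] G} {s t : ℝ}
    (hg : HasFDerivAt g g' (s, t)) : HasDerivAt (fun x => g (x, t)) (g' (1, 0)) s :=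
  hg.comp_hasDerivAt s ((hasDerivAt_id s).prodMk (hasDerivAt_const s t))

lemma HasFDerivAt.hasDerivAt_snd {g : ℝ × ℝ → G} {g' : ℝ × ℝ →L[ℝ] G} {s t : ℝ}
    (hg : HasFDerivAt g g' (s, t)) : HasDerivAt (fun τ => g (s, τ)) (g' (0, 1)) t :=
  hg.comp_hasDerivAt t ((hasDerivAt_const t s).prodMk (hasDerivAt_id t))

lemma deriv_deriv_comm (hF : ContDiff ℝ 2 (fun p : ℝ × ℝ => F p.1 p.2)) (s t : ℝ) :
    deriv (fun τ => deriv (fun x => F x τ) s) t = deriv (fun x => deriv (fun τ => F x τ) t) s := by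
  set f : ℝ × ℝ → G := fun p => F p.1 p.2
  have hf : ∀ p, HasFDerivAt f (fderiv ℝ f p) p :=
    fun p => (hF.differentiable (by norm_num) p).hasFDerivAt
  have hf' : HasFDerivAt (fderiv ℝ f) (fderiv ℝ (fderiv ℝ f) (s, t)) (s, t) :=
    ((hF.fderiv_right (m := 1) (by norm_num)).differentiable (by norm_num) _).hasFDerivAt
  have hsymm := hF.contDiffAt.isSymmSndFDerivAt (x := (s, t)) (by simp)
  have hx : (fun τ => deriv (fun x => F x τ) s) = fun τ => fderiv ℝ f (s, τ) (1, 0) :=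
    funext fun τ => (hf (s, τ)).hasDerivAt_fst.deriv
  have hτ : (fun x => deriv (fun τ => F x τ) t) = fun x => fderiv ℝ f (x, t) (0, 1) :=
    funext fun x => (hf (x, t)).hasDerivAt_snd.deriv
  have hxτ : HasDerivAt (fun τ => fderiv ℝ f (s, τ) (1, 0))
      (fderiv ℝ (fderiv ℝ f) (s, t) (0, 1) (1, 0)) t :=
    (ContinuousLinearMap.apply ℝ G ((1 : ℝ), (0 : ℝ))).hasFDerivAt.comp_hasDerivAt t
      hf'.hasDerivAt_snd
  have hτx : HasDerivAt (fun x => fderiv ℝ f (x, t) (0, 1))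
      (fderiv ℝ (fderiv ℝ f) (s, t) (1, 0) (0, 1)) s :=
    (ContinuousLinearMap.apply ℝ G ((0 : ℝ), (1 : ℝ))).hasFDerivAt.comp_hasDerivAt s
      hf'.hasDerivAt_fst
  rw [hx, hτ, hxτ.deriv, hτx.deriv]
  exact hsymm _ _

lemma deriv_snd_eq_of_eq_deriv_fst {γ T : ℝ → ℝ → G}
    (hγ : ContDiff ℝ 2 (fun p : ℝ × ℝ => γ p.1 p.2))
    (hT : ∀ s t, T s t = deriv (fun x => γ x t) s) (s t : ℝ) :
    deriv (fun τ => T s τ) t = deriv (fun x => deriv (fun τ => γ x τ) t) s := by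
  simp only [hT]
  exact deriv_deriv_comm hγ s t

end PartialDerivatives

lemma mink_comm (v w : Fin 4 → ℝ) : mink v w = mink w v := by
  simp only [mink]; ring

lemma mink_add_left (u v w : Fin 4 → ℝ) : mink (u + v) w = mink u w + mink v w := by
  simp only [mink, Pi.add_apply]; ring

lemma mink_smul_left (a : ℝ) (v w : Fin 4 → ℝ) : mink (a • v) w = a * mink v w := by
  simp only [mink, Pi.smul_apply, smul_eq_mul]; ring

lemma mink_zero_left (w : Fin 4 → ℝ) : mink 0 w = 0 := by
  simpa using mink_smul_left 0 0 w

lemma HasDerivAt.mink {f g : ℝ → Fin 4 → ℝ} {f' g' : Fin 4 → ℝ} {t : ℝ}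
    (hf : HasDerivAt f f' t) (hg : HasDerivAt g g' t) :
    HasDerivAt (fun τ => mink (f τ) (g τ)) (mink f' (g t) + mink (f t) g') t := by
  have hf' := hasDerivAt_pi.1 hf
  have hg' := hasDerivAt_pi.1 hg
  refine (((((hf' 0).mul (hg' 0)).neg.add ((hf' 1).mul (hg' 1))).add
    ((hf' 2).mul (hg' 2))).add ((hf' 3).mul (hg' 3))).congr_deriv ?_
  simp only [_root_.mink]; ring

lemma mink_deriv_eq_neg_of_mink_const {f g : ℝ → Fin 4 → ℝ} {f' g' : Fin 4 → ℝ} {t c : ℝ}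
    (hf : HasDerivAt f f' t) (hg : HasDerivAt g g' t) (hc : ∀ τ, mink (f τ) (g τ) = c) :
    mink f' (g t) = -mink g' (f t) := by
  have h := (hf.mink hg).unique <| (hasDerivAt_const t c).congr_of_eventuallyEq (.of_forall hc)
  rw [mink_comm (f t)] at h
  exact eq_neg_of_add_eq_zero_left h

structure IsPseudoNullFrame (T N B₁ B₂ : Fin 4 → ℝ) : Prop where
  T_T : mink T T = 1
  B₁_B₁ : mink B₁ B₁ = 1
  N_N : mink N N = 0
  B₂_B₂ : mink B₂ B₂ = 0
  N_B₂ : mink N B₂ = 1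
  T_N : mink T N = 0
  T_B₁ : mink T B₁ = 0
  T_B₂ : mink T B₂ = 0
  N_B₁ : mink N B₁ = 0
  B₁_B₂ : mink B₁ B₂ = 0

namespace IsPseudoNullFrame

variable {T N B₁ B₂ : Fin 4 → ℝ}

/-- Since `N` and `B₂` are dual null vectors, the `N`-coefficient is read off by pairing with `B₂`
and vice versa. -/
lemma mink_linear_combination (hF : IsPseudoNullFrame T N B₁ B₂) {v : Fin 4 → ℝ} (a b c d : ℝ)
    (hv : v = a • T + b • N + c • B₁ + d • B₂) :
    mink v T = a ∧ mink v N = d ∧ mink v B₁ = c ∧ mink v B₂ = b := by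
  subst hv
  simp only [mink_add_left, mink_smul_left, hF.T_T, hF.B₁_B₁, hF.N_N, hF.B₂_B₂, hF.N_B₂, hF.T_N,
    hF.T_B₁, hF.T_B₂, hF.N_B₁, hF.B₁_B₂, mink_comm N T, mink_comm B₁ T, mink_comm B₂ T,
    mink_comm B₁ N, mink_comm B₂ N, mink_comm B₂ B₁]
  refine ⟨?_, ?_, ?_, ?_⟩ <;> ring

lemma linearIndependent (hF : IsPseudoNullFrame T N B₁ B₂) :
    LinearIndependent ℝ ![T, N, B₁, B₂] := by
  refine Fintype.linearIndependent_iff.2 fun g hg => ?_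
  simp only [Fin.sum_univ_four, Matrix.cons_val_zero, Matrix.cons_val_one, Matrix.cons_val_two,
    Matrix.cons_val_three, Matrix.head_cons, Matrix.tail_cons] at hg
  obtain ⟨h₀, h₃, h₂, h₁⟩ := hF.mink_linear_combination _ _ _ _ hg.symm
  simp only [mink_zero_left] at h₀ h₁ h₂ h₃
  intro i
  fin_cases i <;> simp [← h₀, ← h₁, ← h₂, ← h₃]

lemma span_eq_top (hF : IsPseudoNullFrame T N B₁ B₂) :
    Submodule.span ℝ (Set.range ![T, N, B₁, B₂]) = ⊤ :=
  hF.linearIndependent.span_eq_top_of_card_eq_finrank (by simp)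

lemma expand (hF : IsPseudoNullFrame T N B₁ B₂) (v : Fin 4 → ℝ) :
    v = mink v T • T + mink v B₂ • N + mink v B₁ • B₁ + mink v N • B₂ := by
  obtain ⟨c, hc⟩ := Submodule.mem_span_range_iff_exists_fun ℝ |>.1
    (hF.span_eq_top ▸ Submodule.mem_top : v ∈ _)
  simp only [Fin.sum_univ_four, Matrix.cons_val_zero, Matrix.cons_val_one, Matrix.cons_val_two,
    Matrix.cons_val_three, Matrix.head_cons, Matrix.tail_cons] at hc
  obtain ⟨hT, hN, hB₁, hB₂⟩ := hF.mink_linear_combination _ _ _ _ hc.symm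
  rw [hT, hN, hB₁, hB₂, hc]

end IsPseudoNullFrame

lemma IsPseudoNullFrame.hasDerivAt_eq {T N B₁ B₂ : ℝ → Fin 4 → ℝ} {T' N' B₁' B₂' : Fin 4 → ℝ}
    {t : ℝ} (hF : ∀ τ, IsPseudoNullFrame (T τ) (N τ) (B₁ τ) (B₂ τ))
    (hT : HasDerivAt T T' t) (hN : HasDerivAt N N' t) (hB₁ : HasDerivAt B₁ B₁' t)
    (hB₂ : HasDerivAt B₂ B₂' t) :
    N' = -mink T' (N t) • T t + mink N' (B₂ t) • N t + mink N' (B₁ t) • B₁ t ∧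
    B₁' = -mink T' (B₁ t) • T t + mink B₁' (B₂ t) • N t - mink N' (B₁ t) • B₂ t ∧
    B₂' = -mink T' (B₂ t) • T t - mink B₁' (B₂ t) • B₁ t - mink N' (B₂ t) • B₂ t := by
  have hNT := mink_deriv_eq_neg_of_mink_const hN hT fun τ => (mink_comm _ _).trans (hF τ).T_N
  have hNN := mink_deriv_eq_neg_of_mink_const hN hN fun τ => (hF τ).N_N
  have hB₁T := mink_deriv_eq_neg_of_mink_const hB₁ hT fun τ => (mink_comm _ _).trans (hF τ).T_B₁
  have hB₁B₁ := mink_deriv_eq_neg_of_mink_const hB₁ hB₁ fun τ => (hF τ).B₁_B₁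
  have hB₁N := mink_deriv_eq_neg_of_mink_const hB₁ hN fun τ => (mink_comm _ _).trans (hF τ).N_B₁
  have hB₂T := mink_deriv_eq_neg_of_mink_const hB₂ hT fun τ => (mink_comm _ _).trans (hF τ).T_B₂
  have hB₂B₂ := mink_deriv_eq_neg_of_mink_const hB₂ hB₂ fun τ => (hF τ).B₂_B₂
  have hB₂N := mink_deriv_eq_neg_of_mink_const hB₂ hN fun τ => (mink_comm _ _).trans (hF τ).N_B₂
  have hB₂B₁ := mink_deriv_eq_neg_of_mink_const hB₂ hB₁ fun τ => (mink_comm _ _).trans (hF τ).B₁_B₂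
  refine ⟨?_, ?_, ?_⟩
  · refine ((hF t).expand N').trans ?_
    rw [hNT, show mink N' (N t) = 0 by linarith]
    module
  · refine ((hF t).expand B₁').trans ?_
    rw [hB₁T, hB₁N, show mink B₁' (B₁ t) = 0 by linarith]
    module
  · refine ((hF t).expand B₂').trans ?_
    rw [hB₂T, hB₂N, hB₂B₁, show mink B₂' (B₂ t) = 0 by linarith]
    module

lemma hasDerivAt_frenet_linear_combination {E : Type*} [NormedAddCommGroup E] [NormedSpace ℝ E]
    {T N B₁ B₂ : ℝ → E} {a₁ a₂ a₃ a₄ : ℝ → ℝ} {a₁' a₂' a₃' a₄' k₁ k₂ k₃ s : ℝ}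
    (hT : HasDerivAt T (k₁ • N s) s) (hN : HasDerivAt N (k₂ • B₁ s) s)
    (hB₁ : HasDerivAt B₁ (k₃ • N s - k₂ • B₂ s) s) (hB₂ : HasDerivAt B₂ (-k₁ • T s - k₃ • B₁ s) s)
    (ha₁ : HasDerivAt a₁ a₁' s) (ha₂ : HasDerivAt a₂ a₂' s) (ha₃ : HasDerivAt a₃ a₃' s)
    (ha₄ : HasDerivAt a₄ a₄' s) :
    HasDerivAt (fun x => a₁ x • T x + a₂ x • N x + a₃ x • B₁ x + a₄ x • B₂ x)
      ((a₁' - a₄ s * k₁) • T s + (a₂' + a₁ s * k₁ + a₃ s * k₃) • N s +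
        (a₃' + a₂ s * k₂ - a₄ s * k₃) • B₁ s + (a₄' - a₃ s * k₂) • B₂ s) s :=
  ((((ha₁.smul hT).add (ha₂.smul hN)).add (ha₃.smul hB₁)).add (ha₄.smul hB₂)).congr_deriv
    (by module)

theorem frame_evolution_pseudo_null_general
    (γ T N B₁ B₂ : ℝ → ℝ → (Fin 4 → ℝ))
    (k₁ k₂ k₃ α₁ α₂ α₃ α₄ : ℝ → ℝ → ℝ)
    (ψ₁ ψ₂ ψ₃ : ℝ → ℝ → ℝ)
    (hγsmooth : ContDiff ℝ (⊤ : ℕ∞) (fun p : ℝ × ℝ => γ p.1 p.2))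
    (hTsmooth : ContDiff ℝ (⊤ : ℕ∞) (fun p : ℝ × ℝ => T p.1 p.2))
    (hNsmooth : ContDiff ℝ (⊤ : ℕ∞) (fun p : ℝ × ℝ => N p.1 p.2))
    (hB₁smooth : ContDiff ℝ (⊤ : ℕ∞) (fun p : ℝ × ℝ => B₁ p.1 p.2))
    (hB₂smooth : ContDiff ℝ (⊤ : ℕ∞) (fun p : ℝ × ℝ => B₂ p.1 p.2))
    (hα₁smooth : ContDiff ℝ (⊤ : ℕ∞) (fun p : ℝ × ℝ => α₁ p.1 p.2))
    (hα₂smooth : ContDiff ℝ (⊤ : ℕ∞) (fun p : ℝ × ℝ => α₂ p.1 p.2))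
    (hα₃smooth : ContDiff ℝ (⊤ : ℕ∞) (fun p : ℝ × ℝ => α₃ p.1 p.2))
    (hα₄smooth : ContDiff ℝ (⊤ : ℕ∞) (fun p : ℝ × ℝ => α₄ p.1 p.2))
    (hTT : ∀ s t : ℝ, mink (T s t) (T s t) = 1)
    (hB₁B₁ : ∀ s t : ℝ, mink (B₁ s t) (B₁ s t) = 1)
    (hNN : ∀ s t : ℝ, mink (N s t) (N s t) = 0)
    (hB₂B₂ : ∀ s t : ℝ, mink (B₂ s t) (B₂ s t) = 0)
    (hNB₂ : ∀ s t : ℝ, mink (N s t) (B₂ s t) = 1)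
    (hTN : ∀ s t : ℝ, mink (T s t) (N s t) = 0)
    (hTB₁ : ∀ s t : ℝ, mink (T s t) (B₁ s t) = 0)
    (hTB₂ : ∀ s t : ℝ, mink (T s t) (B₂ s t) = 0)
    (hNB₁ : ∀ s t : ℝ, mink (N s t) (B₁ s t) = 0)
    (hB₁B₂ : ∀ s t : ℝ, mink (B₁ s t) (B₂ s t) = 0)
    -- arclength parametrization and pseudo null Frenet equations (k₁ = 1)
    (hk₁ : ∀ s t : ℝ, k₁ s t = 1)
    (hT : ∀ s t : ℝ, T s t = deriv (fun x => γ x t) s)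
    (hfr₁ : ∀ s t : ℝ, deriv (fun x => T x t) s = k₁ s t • N s t)
    (hfr₂ : ∀ s t : ℝ, deriv (fun x => N x t) s = k₂ s t • B₁ s t)
    (hfr₃ : ∀ s t : ℝ, deriv (fun x => B₁ x t) s = k₃ s t • N s t - k₂ s t • B₂ s t)
    (hfr₄ : ∀ s t : ℝ, deriv (fun x => B₂ x t) s = -(k₁ s t) • T s t - k₃ s t • B₁ s t)
    (hflow : ∀ s t : ℝ, deriv (fun x => γ s x) t =
      α₁ s t • T s t + α₂ s t • N s t + α₃ s t • B₁ s t + α₄ s t • B₂ s t)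
    (hψ₁ : ∀ s t : ℝ, ψ₁ s t = mink (deriv (fun x => N s x) t) (B₁ s t))
    (hψ₂ : ∀ s t : ℝ, ψ₂ s t = mink (deriv (fun x => N s x) t) (B₂ s t))
    (hψ₃ : ∀ s t : ℝ, ψ₃ s t = mink (deriv (fun x => B₁ s x) t) (B₂ s t)) :
    ∀ s t : ℝ,
      deriv (fun x => N s x) t =
        -(deriv (fun x => α₄ x t) s - α₃ s t * k₂ s t) • T s t +
        ψ₂ s t • N s t + ψ₁ s t • B₁ s t ∧
      deriv (fun x => B₁ s x) t =
        -(deriv (fun x => α₃ x t) s + α₂ s t * k₂ s t - α₄ s t * k₃ s t) • T s t +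
        ψ₃ s t • N s t - ψ₁ s t • B₂ s t ∧
      deriv (fun x => B₂ s x) t =
        -(deriv (fun x => α₂ x t) s + α₁ s t + α₃ s t * k₃ s t) • T s t -
        ψ₃ s t • B₁ s t - ψ₂ s t • B₂ s t := by
  intro s t
  have hframe : ∀ s t, IsPseudoNullFrame (T s t) (N s t) (B₁ s t) (B₂ s t) := fun s t =>
    ⟨hTT s t, hB₁B₁ s t, hNN s t, hB₂B₂ s t, hNB₂ s t, hTN s t, hTB₁ s t, hTB₂ s t, hNB₁ s t,
      hB₁B₂ s t⟩
  have hV := hasDerivAt_frenet_linear_combination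
    ((hasDerivAt_partial_fst (hTsmooth.differentiable (by simp)) s t).congr_deriv (hfr₁ s t))
    ((hasDerivAt_partial_fst (hNsmooth.differentiable (by simp)) s t).congr_deriv (hfr₂ s t))
    ((hasDerivAt_partial_fst (hB₁smooth.differentiable (by simp)) s t).congr_deriv (hfr₃ s t))
    ((hasDerivAt_partial_fst (hB₂smooth.differentiable (by simp)) s t).congr_deriv (hfr₄ s t))
    (hasDerivAt_partial_fst (hα₁smooth.differentiable (by simp)) s t)
    (hasDerivAt_partial_fst (hα₂smooth.differentiable (by simp)) s t)
    (hasDerivAt_partial_fst (hα₃smooth.differentiable (by simp)) s t)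
    (hasDerivAt_partial_fst (hα₄smooth.differentiable (by simp)) s t)
  have hTt := hasDerivAt_partial_snd (hTsmooth.differentiable (by simp)) s t
  rw [deriv_snd_eq_of_eq_deriv_fst (hγsmooth.of_le (WithTop.coe_le_coe.2 le_top)) hT s t,
    funext fun x => hflow x t, hV.deriv] at hTt
  obtain ⟨hNt, hB₁t, hB₂t⟩ := IsPseudoNullFrame.hasDerivAt_eq (hframe s) hTt
    (hasDerivAt_partial_snd (hNsmooth.differentiable (by simp)) s t)
    (hasDerivAt_partial_snd (hB₁smooth.differentiable (by simp)) s t)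
    (hasDerivAt_partial_snd (hB₂smooth.differentiable (by simp)) s t)
  obtain ⟨-, hTtN, hTtB₁, hTtB₂⟩ := (hframe s t).mink_linear_combination _ _ _ _ rfl
  rw [hTtN, ← hψ₁ s t, ← hψ₂ s t] at hNt
  rw [hTtB₁, ← hψ₁ s t, ← hψ₃ s t] at hB₁t
  rw [hTtB₂, ← hψ₂ s t, ← hψ₃ s t, hk₁ s t, mul_one] at hB₂t
  exact ⟨hNt, hB₁t, hB₂t⟩

theorem frame_evolution_pseudo_null
    (γ T N B₁ B₂ : ℝ → ℝ → (Fin 4 → ℝ))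
    (k₁ k₂ k₃ α₁ α₂ α₃ α₄ : ℝ → ℝ → ℝ)
    (ψ₁ ψ₂ ψ₃ : ℝ → ℝ → ℝ)
    (hγsmooth : ContDiff ℝ (⊤ : ℕ∞) (fun p : ℝ × ℝ => γ p.1 p.2))
    (hTsmooth : ContDiff ℝ (⊤ : ℕ∞) (fun p : ℝ × ℝ => T p.1 p.2))
    (hNsmooth : ContDiff ℝ (⊤ : ℕ∞) (fun p : ℝ × ℝ => N p.1 p.2))
    (hB₁smooth : ContDiff ℝ (⊤ : ℕ∞) (fun p : ℝ × ℝ => B₁ p.1 p.2))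
    (hB₂smooth : ContDiff ℝ (⊤ : ℕ∞) (fun p : ℝ × ℝ => B₂ p.1 p.2))
    (hk₂smooth : ContDiff ℝ (⊤ : ℕ∞) (fun p : ℝ × ℝ => k₂ p.1 p.2))
    (hk₃smooth : ContDiff ℝ (⊤ : ℕ∞) (fun p : ℝ × ℝ => k₃ p.1 p.2))
    (hα₁smooth : ContDiff ℝ (⊤ : ℕ∞) (fun p : ℝ × ℝ => α₁ p.1 p.2))
    (hα₂smooth : ContDiff ℝ (⊤ : ℕ∞) (fun p : ℝ × ℝ => α₂ p.1 p.2))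
    (hα₃smooth : ContDiff ℝ (⊤ : ℕ∞) (fun p : ℝ × ℝ => α₃ p.1 p.2))
    (hα₄smooth : ContDiff ℝ (⊤ : ℕ∞) (fun p : ℝ × ℝ => α₄ p.1 p.2))
    (hTT : ∀ s t : ℝ, mink (T s t) (T s t) = 1)
    (hB₁B₁ : ∀ s t : ℝ, mink (B₁ s t) (B₁ s t) = 1)
    (hNN : ∀ s t : ℝ, mink (N s t) (N s t) = 0)
    (hB₂B₂ : ∀ s t : ℝ, mink (B₂ s t) (B₂ s t) = 0)
    (hNB₂ : ∀ s t : ℝ, mink (N s t) (B₂ s t) = 1)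
    (hTN : ∀ s t : ℝ, mink (T s t) (N s t) = 0)
    (hTB₁ : ∀ s t : ℝ, mink (T s t) (B₁ s t) = 0)
    (hTB₂ : ∀ s t : ℝ, mink (T s t) (B₂ s t) = 0)
    (hNB₁ : ∀ s t : ℝ, mink (N s t) (B₁ s t) = 0)
    (hB₁B₂ : ∀ s t : ℝ, mink (B₁ s t) (B₂ s t) = 0)
    -- arclength parametrization and pseudo null Frenet equations (k₁ = 1)
    (hk₁ : ∀ s t : ℝ, k₁ s t = 1)
    (hT : ∀ s t : ℝ, T s t = deriv (fun x => γ x t) s)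
    (hunit : ∀ s t : ℝ, mnorm (deriv (fun x => γ x t) s) = 1)
    (hfr₁ : ∀ s t : ℝ, deriv (fun x => T x t) s = k₁ s t • N s t)
    (hfr₂ : ∀ s t : ℝ, deriv (fun x => N x t) s = k₂ s t • B₁ s t)
    (hfr₃ : ∀ s t : ℝ, deriv (fun x => B₁ x t) s = k₃ s t • N s t - k₂ s t • B₂ s t)
    (hfr₄ : ∀ s t : ℝ, deriv (fun x => B₂ x t) s = -(k₁ s t) • T s t - k₃ s t • B₁ s t)
    (hflow : ∀ s t : ℝ, deriv (fun x => γ s x) t =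
      α₁ s t • T s t + α₂ s t • N s t + α₃ s t • B₁ s t + α₄ s t • B₂ s t)
    -- inextensibility: ∂α₁/∂s = α₄
    (hinext : ∀ s t : ℝ, deriv (fun x => α₁ x t) s = α₄ s t)
    (hψ₁ : ∀ s t : ℝ, ψ₁ s t = mink (deriv (fun x => N s x) t) (B₁ s t))
    (hψ₂ : ∀ s t : ℝ, ψ₂ s t = mink (deriv (fun x => N s x) t) (B₂ s t))
    (hψ₃ : ∀ s t : ℝ, ψ₃ s t = mink (deriv (fun x => B₁ s x) t) (B₂ s t)) :
    ∀ s t : ℝ,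
      deriv (fun x => N s x) t =
        -(deriv (fun x => α₄ x t) s - α₃ s t * k₂ s t) • T s t +
        ψ₂ s t • N s t + ψ₁ s t • B₁ s t ∧
      deriv (fun x => B₁ s x) t =
        -(deriv (fun x => α₃ x t) s + α₂ s t * k₂ s t - α₄ s t * k₃ s t) • T s t +
        ψ₃ s t • N s t - ψ₁ s t • B₂ s t ∧
      deriv (fun x => B₂ s x) t =
        -(deriv (fun x => α₂ x t) s + α₁ s t + α₃ s t * k₃ s t) • T s t -
        ψ₃ s t • B₁ s t - ψ₂ s t • B₂ s t :=
  frame_evolution_pseudo_null_general γ T N B₁ B₂ k₁ k₂ k₃ α₁ α₂ α₃ α₄ ψ₁ ψ₂ ψ₃ hγsmooth hTsmooth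
    hNsmooth hB₁smooth hB₂smooth hα₁smooth hα₂smooth hα₃smooth hα₄smooth hTT hB₁B₁ hNN hB₂B₂ hNB₂
    hTN hTB₁ hTB₂ hNB₁ hB₁B₂ hk₁ hT hfr₁ hfr₂ hfr₃ hfr₄ hflow hψ₁ hψ₂ hψ₃
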